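/- arXiv:2601.08369 — 2 statements merged into one kernel-verified Lean document; each statement's English description precedes it below -/
import Mathlib

section
/- Let B(u) = (e-2)/ρ(u) where ρ(u) = u^{1/(u-1)} - (u+1)/u (extended continuously at u = 1 by ρ(1) = e-2). Then B(1) = 1, B'(1) = 1/2, and the variance functional v = B''(1) + B'(1) - B'(1)^2 equals (3-e)/(6(e-2)), which is strictly positive. -/
open Filter Real Set FormalMultilinearSeries
open scoped Topology ENNReal NNReal

namespace VarB

noncomputable def c : ℕ → ℝ := fun n => (-1)^n / (n+1)

noncomputable def p : FormalMultilinearSeries ℝ ℝ ℝ := FormalMultilinearSeries.ofScalars ℝ c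

noncomputable def f : ℝ → ℝ := p.sum

lemma norm_c (n : ℕ) : ‖c n‖ = 1/((n:ℝ)+1) := by
  have : ((n:ℝ)+1) > 0 := by positivity
  simp [c, abs_div, abs_pow, abs_of_pos this]

lemma radius_ge : 1 ≤ p.radius := by
  have h2 : Tendsto (fun n : ℕ => 1/((n:ℝ)+1+1)) atTop (𝓝 0) := by
    have : Tendsto (fun n : ℕ => ((n:ℝ)+1+1)) atTop atTop := by
      apply tendsto_atTop_add_const_right
      apply tendsto_atTop_add_const_right
      exact tendsto_natCast_atTop_atTop
    simpa [one_div, Function.comp_def] using tendsto_inv_atTop_zero.comp this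
  have h : Tendsto (fun n : ℕ => ‖c n.succ‖ / ‖c n‖) atTop (𝓝 ((1:ℝ≥0) : ℝ)) := by
    have heq : (fun n : ℕ => ‖c n.succ‖ / ‖c n‖) = fun n : ℕ => 1 - 1/((n:ℝ)+1+1) := by
      funext n
      rw [norm_c, norm_c]
      have h1 : ((n:ℝ)+1) > 0 := by positivity
      have h2 : ((n:ℝ)+1+1) > 0 := by positivity
      push_cast
      field_simp
      try ring
    rw [heq]
    simpa using tendsto_const_nhds.sub h2
  have := FormalMultilinearSeries.inv_le_ofScalars_radius_of_tendsto ℝ c one_ne_zero h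
  simpa [p] using this

lemma hfp : HasFPowerSeriesOnBall f p 0 1 :=
  (p.hasFPowerSeriesOnBall (zero_lt_one.trans_le radius_ge)).mono zero_lt_one radius_ge

lemma mem_ball_of_abs {t : ℝ} (ht : |t| < 1) : t ∈ Metric.eball (0:ℝ) 1 := by
  rw [Metric.mem_eball, edist_dist, Real.dist_eq, sub_zero, ← ENNReal.ofReal_one]
  exact ENNReal.ofReal_lt_ofReal_iff_of_nonneg (abs_nonneg t) |>.mpr ht

lemma f_eq {t : ℝ} (ht : |t| < 1) (ht0 : t ≠ 0) : f t = Real.log (1+t) / t := by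
  have h1 := hasSum_pow_div_log_of_abs_lt_one (x := -t) (by rwa [abs_neg])
  have h2 := h1.mul_left (-t⁻¹)
  have h3 : HasSum (fun n : ℕ => c n * t^n) (Real.log (1+t) / t) := by
    convert h2 using 1
    · rfl
    · funext n
      have hn : ((n:ℝ)+1) ≠ 0 := by positivity
      have hpw : (-t)^(n+1) = (-1)^(n+1) * t^(n+1) := by rw [neg_pow]
      simp only [c, hpw, pow_succ]
      field_simp
    · rw [sub_neg_eq_add]
      field_simp
  have hsum : f t = ∑' n, c n * t^n := by
    unfold f FormalMultilinearSeries.sum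
    apply tsum_congr
    intro n
    rw [show p n = FormalMultilinearSeries.ofScalars ℝ c n from rfl,
      FormalMultilinearSeries.ofScalars_apply_eq, smul_eq_mul]
  rw [hsum, h3.tsum_eq]

lemma iter_deriv (n : ℕ) : iteratedDeriv n f 0 = (n.factorial : ℝ) * c n := by
  have h := hfp.factorial_smul (1:ℝ) n
  rw [iteratedDeriv_eq_iteratedFDeriv, ← h,
    show p n = FormalMultilinearSeries.ofScalars ℝ c n from rfl,
    FormalMultilinearSeries.ofScalars_apply_eq]
  simp [nsmul_eq_mul]

lemma f0 : f 0 = 1 := by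
  have := iter_deriv 0
  simpa [c] using this

lemma df0 : deriv f 0 = -(1/2) := by
  have := iter_deriv 1
  rw [iteratedDeriv_one] at this
  rw [this]
  norm_num [c]

lemma ddf0 : deriv (deriv f) 0 = 2/3 := by
  have := iter_deriv 2
  rw [iteratedDeriv_succ, iteratedDeriv_one] at this
  rw [this]
  norm_num [c]

lemma hf_deriv {t : ℝ} (ht : |t| < 1) : HasDerivAt f (deriv f t) t :=
  ((hfp.analyticOnNhd t (mem_ball_of_abs ht)).differentiableAt).hasDerivAt

lemma hdf_deriv : HasDerivAt (deriv f) (2/3) 0 := by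
  have h := ((hfp.analyticOnNhd.deriv 0 (mem_ball_of_abs (by norm_num))).differentiableAt).hasDerivAt
  rwa [ddf0] at h

noncomputable def DD : ℝ → ℝ := fun u => Real.exp (f (u-1)) - (u+1)/u
noncomputable def DD' : ℝ → ℝ := fun u => Real.exp (f (u-1)) * deriv f (u-1) + 1/u^2
noncomputable def GG : ℝ → ℝ := fun u => (Real.exp 1 - 2) / DD u
noncomputable def gg : ℝ → ℝ := fun u => -((Real.exp 1 - 2) * DD' u) / (DD u)^2

lemma ball_facts {u : ℝ} (hu : u ∈ Metric.ball (1:ℝ) (1/2)) : |u - 1| < 1 ∧ u ≠ 0 := by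
  rw [Metric.mem_ball, Real.dist_eq] at hu
  have h1 : |u - 1| < 1 := lt_trans hu (by norm_num)
  refine ⟨h1, ?_⟩
  intro h
  rw [h] at hu
  rw [show (0:ℝ) - 1 = -1 by ring] at hu
  norm_num at hu

lemma hDD {u : ℝ} (hu : u ∈ Metric.ball (1:ℝ) (1/2)) : HasDerivAt DD (DD' u) u := by
  obtain ⟨h1, hu0⟩ := ball_facts hu
  have hφ : HasDerivAt (fun v : ℝ => f (v-1)) (deriv f (u-1)) u := by
    simpa [Function.comp_def] using (hf_deriv h1).comp u ((hasDerivAt_id u).sub_const 1)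
  have hexp := hφ.exp
  have hr : HasDerivAt (fun v : ℝ => (v+1)/v) ((1*u - (u+1)*1)/u^2) u :=
    ((hasDerivAt_id u).add_const 1).div (hasDerivAt_id u) hu0
  have h := hexp.sub hr
  refine h.congr_deriv ?_
  unfold DD'
  field_simp
  ring

lemma DD_one : DD 1 = Real.exp 1 - 2 := by
  unfold DD
  norm_num [f0]

lemma exp_one_pos' : (0:ℝ) < Real.exp 1 - 2 := by
  have := Real.exp_one_gt_d9
  linarith

lemma DD'_one : DD' 1 = 1 - Real.exp 1 / 2 := by
  unfold DD'
  norm_num [f0, df0]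
  ring

noncomputable def sG : Set ℝ := Metric.ball (1:ℝ) (1/2) ∩ DD ⁻¹' {0}ᶜ

lemma sG_open : IsOpen sG :=
  ContinuousOn.isOpen_inter_preimage (fun u hu => ((hDD hu).continuousAt).continuousWithinAt)
    Metric.isOpen_ball isOpen_compl_singleton

lemma one_mem_sG : (1:ℝ) ∈ sG := by
  constructor
  · simp [Metric.mem_ball]
  · simp only [mem_preimage, mem_compl_iff, mem_singleton_iff, DD_one]
    exact ne_of_gt exp_one_pos'

lemma sG_nhds : sG ∈ 𝓝 (1:ℝ) := sG_open.mem_nhds one_mem_sG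

lemma hGG {u : ℝ} (hu : u ∈ sG) : HasDerivAt GG (gg u) u := by
  have hD' := hDD hu.1
  have hDne : DD u ≠ 0 := hu.2
  have h := (hasDerivAt_const u (Real.exp 1 - 2)).div hD' hDne
  refine h.congr_deriv ?_
  unfold gg
  ring

lemma derivGG_eq : deriv GG =ᶠ[𝓝 1] gg :=
  eventually_of_mem sG_nhds fun u hu => (hGG hu).deriv

lemma hDD'_one : HasDerivAt DD' (11 * Real.exp 1 / 12 - 2) 1 := by
  have hsub : HasDerivAt (fun v : ℝ => v - 1) 1 1 := (hasDerivAt_id 1).sub_const 1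
  have hf1 : HasDerivAt f (deriv f ((1:ℝ)-1)) ((1:ℝ) - 1) := hf_deriv (by norm_num)
  have hφ : HasDerivAt (fun v : ℝ => f (v-1)) (deriv f 0) 1 := by
    have h := HasDerivAt.comp (h := fun v : ℝ => v - 1) (x := (1:ℝ)) hf1 hsub
    simpa [Function.comp_def, show (1:ℝ)-1 = 0 from by norm_num] using h
  have hexp := hφ.exp
  have hdf0 : HasDerivAt (deriv f) (2/3) ((1:ℝ)-1) := by
    rw [show (1:ℝ)-1 = 0 from by norm_num]
    exact hdf_deriv
  have hdf1 : HasDerivAt (fun v : ℝ => deriv f (v-1)) (2/3) 1 := by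
    have h := HasDerivAt.comp (h := fun v : ℝ => v - 1) (x := (1:ℝ)) hdf0 hsub
    simpa [Function.comp_def] using h
  have hprod := hexp.mul hdf1
  have hinv := (hasDerivAt_const (1:ℝ) (1:ℝ)).div (hasDerivAt_pow 2 (1:ℝ)) (by norm_num : (1:ℝ)^2 ≠ 0)
  have h := hprod.add hinv
  unfold DD'
  refine h.congr_deriv ?_
  norm_num [f0, df0]
  ring

lemma hgg_one : HasDerivAt gg
    ((-((Real.exp 1 - 2) * (11 * Real.exp 1 / 12 - 2)) * (DD 1)^2
      - -((Real.exp 1 - 2) * DD' 1) * (2 * DD 1 ^ 1 * DD' 1)) / ((DD 1)^2)^2) 1 := by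
  have hN : HasDerivAt (fun u => -((Real.exp 1 - 2) * DD' u))
      (-((Real.exp 1 - 2) * (11 * Real.exp 1 / 12 - 2))) 1 := (hDD'_one.const_mul _).neg
  have hden : HasDerivAt (fun u => (DD u)^2) (2 * DD 1 ^ 1 * DD' 1) 1 := by
    have h := (hDD one_mem_sG.1).pow 2
    norm_num at h ⊢
    exact h
  have hdne : (DD 1)^2 ≠ 0 := pow_ne_zero 2 (ne_of_gt (DD_one ▸ exp_one_pos'))
  exact hN.div hden hdne

lemma final_value : deriv gg 1 + 1/2 - (1/2)^2 = (3 - Real.exp 1) / (6 * (Real.exp 1 - 2)) := by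
  rw [hgg_one.deriv, DD_one, DD'_one]
  have he2' : Real.exp 1 - 2 ≠ 0 := ne_of_gt exp_one_pos'
  field_simp
  ring

lemma gg_one : gg 1 = 1/2 := by
  unfold gg
  rw [DD_one, DD'_one]
  have he2' : Real.exp 1 - 2 ≠ 0 := ne_of_gt exp_one_pos'
  field_simp
  ring

end VarB

/-- With `B(u) = (e-2)/ρ(u)`, `ρ(u) = u^{1/(u-1)} - (u+1)/u`
(extended by `ρ(1) = e-2`), one has `B(1) = 1`, `B'(1) = 1/2`, and the
variance functional `B''(1) + B'(1) - B'(1)²` equals `(3-e)/(6(e-2)) > 0`. -/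
theorem variance_functional_of_B (ρ B : ℝ → ℝ)
    (hρ : ρ = fun u => if u = 1 then Real.exp 1 - 2
      else Real.exp (Real.log u / (u - 1)) - (u + 1) / u)
    (hB : B = fun u => (Real.exp 1 - 2) / ρ u) :
    B 1 = 1 ∧ deriv B 1 = 1 / 2 ∧
    deriv (deriv B) 1 + deriv B 1 - (deriv B 1) ^ 2
      = (3 - Real.exp 1) / (6 * (Real.exp 1 - 2)) ∧
    0 < (3 - Real.exp 1) / (6 * (Real.exp 1 - 2)) := by
  have he2 : (0:ℝ) < Real.exp 1 - 2 := VarB.exp_one_pos'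
  have he2' : Real.exp 1 - 2 ≠ 0 := ne_of_gt he2
  have he3 : Real.exp 1 < 3 := by
    have := Real.exp_one_lt_d9; linarith
  have hBG : B =ᶠ[𝓝 1] VarB.GG := by
    apply eventually_of_mem (Metric.ball_mem_nhds (1:ℝ) (by norm_num : (0:ℝ) < 1/2))
    intro u hu
    obtain ⟨h1, hu0⟩ := VarB.ball_facts hu
    rw [hB, VarB.GG]
    simp only
    congr 1
    rw [hρ]
    by_cases h : u = 1
    · subst h
      simp only [VarB.DD]
      norm_num [VarB.f0]
    · have hne : u - 1 ≠ 0 := sub_ne_zero.mpr h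
      simp only [h, if_false, VarB.DD]
      rw [VarB.f_eq h1 hne]
      norm_num
  have hB1 : B 1 = 1 := by
    rw [hB, hρ]
    simp [div_self he2']
  have hdB : deriv B 1 = deriv VarB.GG 1 := hBG.deriv_eq
  have hdG : deriv VarB.GG 1 = VarB.gg 1 := (VarB.hGG VarB.one_mem_sG).deriv
  have hderivB1 : deriv B 1 = 1/2 := by rw [hdB, hdG, VarB.gg_one]
  have hddB : deriv (deriv B) 1 = deriv VarB.gg 1 :=
    (hBG.deriv.trans VarB.derivGG_eq).deriv_eq
  rw [hddB, hderivB1]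
  exact ⟨hB1, rfl, VarB.final_value, div_pos (by linarith) (by linarith)⟩
end

section
/- For u > 0, the function ρ(u) = u^{1/(u-1)} - (u+1)/u (extended by ρ(1) = e-2) is strictly positive for all u > 0. -/
/-- The function `ρ(u) = u^{1/(u-1)} - (u+1)/u` (with
`ρ(1) = e-2`) is strictly positive for all `u > 0`. -/
theorem rho_pos (ρ : ℝ → ℝ)
    (hρ : ρ = fun u => if u = 1 then Real.exp 1 - 2
      else Real.exp (Real.log u / (u - 1)) - (u + 1) / u) :
    ∀ u : ℝ, 0 < u → 0 < ρ u := by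
  subst hρ
  intro u hu
  by_cases h1 : u = 1
  · simp only [h1, if_pos rfl]
    have := Real.exp_one_gt_d9
    norm_num at this ⊢
    linarith
  · simp only [if_neg h1]
    have hpos : (0:ℝ) < (u + 1) / u := by positivity
    have key : Real.log ((u + 1) / u) < Real.log u / (u - 1) := by
      have hne : (u + 1) / u ≠ 1 := by
        intro h
        rw [div_eq_one_iff_eq (ne_of_gt hu)] at h
        linarith
      have hlog1 : Real.log ((u + 1) / u) < (u + 1) / u - 1 :=
        Real.log_lt_sub_one_of_pos hpos hne
      rcases lt_or_gt_of_ne h1 with hlt | hgt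
      · -- 0 < u < 1
        have hlogu : Real.log u < u - 1 := Real.log_lt_sub_one_of_pos hu h1
        have hlog2 : Real.log (u + 1) < u := by
          have := Real.log_lt_sub_one_of_pos (by linarith : (0:ℝ) < u + 1)
            (by intro h; linarith : u + 1 ≠ 1)
          linarith
        have hsplit : Real.log ((u + 1) / u) = Real.log (u + 1) - Real.log u :=
          Real.log_div (by linarith) (ne_of_gt hu)
        rw [hsplit, lt_div_iff_of_neg (by linarith : u - 1 < 0)]
        nlinarith [mul_pos hu (sub_pos.mpr hlt)]
      · -- u > 1
        have hloginv : Real.log u⁻¹ < u⁻¹ - 1 :=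
          Real.log_lt_sub_one_of_pos (by positivity)
            (by simp [inv_eq_one]; exact h1)
        rw [Real.log_inv] at hloginv
        have hlogu : 1 - 1 / u < Real.log u := by
          have : u⁻¹ = 1 / u := by ring
          linarith [this ▸ hloginv]
        rw [lt_div_iff₀ (by linarith : (0:ℝ) < u - 1)]
        have h3 : (u + 1) / u - 1 = 1 / u := by field_simp; ring
        rw [h3] at hlog1
        have hu' : (0:ℝ) < u - 1 := by linarith
        have h4 : 1 / u * (u - 1) = 1 - 1 / u := by field_simp
        linarith [mul_lt_mul_of_pos_right hlog1 hu']
    have : (u + 1) / u = Real.exp (Real.log ((u + 1) / u)) := (Real.exp_log hpos).symm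
    rw [this]
    have := Real.exp_lt_exp.mpr key
    linarith
end
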